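/- arXiv:2405.19637 — 3 statements merged into one kernel-verified Lean document; each statement's English description precedes it below -/
import Mathlib

section
/- With V = U^⊤U as above (n ≥ 3), the matrix V is invertible and its inverse is given explicitly by: (V^{-1})_{ij} = (2n−1)/(n(n−1)) if 1 ≤ i = j ≤ n−1; (n²−3n+1)/(n(n−1)(n−2)) if 1 ≤ i ≠ j ≤ n−1; (2n−3)/((n−1)(n−2)) if i = j = n; 1/(n−1) if exactly one of i, j equals n and the other is in [n−1]; −1/n if (i ≤ n−1 and j = n+i) or (i ≥ n+1 and j = i−n); −1/(n−2) if exactly one of i,j equals n and the other is in {n+1,…,2n−1}; −(n−1)/(n(n−2)) if one index is in {n+1,…,2n−1} and the other is in [n−1] with j ≠ n+i and i ≠ n+j; 2(n−1)/(n(n−2)) if n+1 ≤ i = j ≤ 2n−1; and (n−1)/(n(n−2)) if n+1 ≤ i ≠ j ≤ 2n−1. -/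
open Matrix

noncomputable def Umat (n : ℕ) : Matrix (Fin n × Fin n) (Fin n ⊕ Fin (n - 1)) ℝ :=
  fun p c =>
    if p.1 = p.2 then 0
    else
      match c with
      | Sum.inl k => if k = p.1 then 1 else 0
      | Sum.inr l => if (p.2 : ℕ) = (l : ℕ) then 1 else 0

noncomputable def Vmat (n : ℕ) : Matrix (Fin n ⊕ Fin (n - 1)) (Fin n ⊕ Fin (n - 1)) ℝ :=
  (Umat n)ᵀ * Umat n

/-- The explicit inverse of `V = UᵀU` from the paper. Here the paper's index `i = n`
(the last out-degree index) corresponds to `Sum.inl i` with `(i : ℕ) = n - 1`, and the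
paper's index `n + j` corresponds to `Sum.inr j`. -/
noncomputable def Winv (n : ℕ) : Matrix (Fin n ⊕ Fin (n - 1)) (Fin n ⊕ Fin (n - 1)) ℝ :=
  fun a b =>
    match a, b with
    | Sum.inl i, Sum.inl j =>
        if (i : ℕ) = n - 1 then
          (if (j : ℕ) = n - 1 then (2 * (n : ℝ) - 3) / (((n : ℝ) - 1) * ((n : ℝ) - 2))
           else 1 / ((n : ℝ) - 1))
        else if (j : ℕ) = n - 1 then 1 / ((n : ℝ) - 1)
        else if i = j then (2 * (n : ℝ) - 1) / ((n : ℝ) * ((n : ℝ) - 1))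
        else ((n : ℝ) ^ 2 - 3 * (n : ℝ) + 1) / ((n : ℝ) * ((n : ℝ) - 1) * ((n : ℝ) - 2))
    | Sum.inl i, Sum.inr l =>
        if (i : ℕ) = n - 1 then -1 / ((n : ℝ) - 2)
        else if (i : ℕ) = (l : ℕ) then -1 / (n : ℝ)
        else -((n : ℝ) - 1) / ((n : ℝ) * ((n : ℝ) - 2))
    | Sum.inr l, Sum.inl j =>
        if (j : ℕ) = n - 1 then -1 / ((n : ℝ) - 2)
        else if (j : ℕ) = (l : ℕ) then -1 / (n : ℝ)
        else -((n : ℝ) - 1) / ((n : ℝ) * ((n : ℝ) - 2))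
    | Sum.inr l, Sum.inr l' =>
        if l = l' then 2 * ((n : ℝ) - 1) / ((n : ℝ) * ((n : ℝ) - 2))
        else ((n : ℝ) - 1) / ((n : ℝ) * ((n : ℝ) - 2))

/-! `V = (n - 1) • 1 + B`, where `B` is `1` on the two off-diagonal blocks except at the matched
positions `(i, n + i)`, where it is `0`. Hence a row of `V * M` is `n - 1` times that row of `M`,
plus a column sum of the opposite block of `M`, minus the entry in the matched row. Each column of
each block of `Winv` is constant off at most two entries, so these column sums are explicit, and
`V * Winv = 1` becomes a rational identity in `n` in each case. A one-sided inverse of a square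
matrix is two-sided. -/

open Finset

section FintypeSums

variable {α R : Type*} [Fintype α] [DecidableEq α]

theorem Fintype.sum_eq_sum_add_card_compl_nsmul [AddCommMonoid R] (s : Finset α) {f : α → R}
    {c : R} (hf : ∀ x ∉ s, f x = c) : ∑ x, f x = ∑ x ∈ s, f x + #sᶜ • c := by
  rw [← sum_add_sum_compl s f, sum_eq_card_nsmul fun x hx => hf x (mem_compl.1 hx)]

theorem Fintype.sum_ite_eq_zero_sub [AddCommGroup R] (a : α) (f : α → R) :
    ∑ x, (if a = x then 0 else f x) = ∑ x, f x - f a := by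
  rw [eq_sub_iff_add_eq, ← add_sum_erase _ _ (mem_univ a), add_comm, sum_ite]
  simp [filter_ne]

variable [Ring R] {f : α → R} {c : R}

theorem Fintype.sum_eq_add_card_sub_one_mul (p : α) (hf : ∀ x, x ≠ p → f x = c) :
    ∑ x, f x = f p + (Fintype.card α - 1) * c := by
  rw [sum_eq_sum_add_card_compl_nsmul {p} fun x hx => hf x (by simpa using hx), sum_singleton,
    card_compl, card_singleton, nsmul_eq_mul, Nat.cast_pred (Fintype.card_pos_iff.2 ⟨p⟩)]

theorem Fintype.sum_eq_add_add_card_sub_two_mul {p q : α} (hpq : p ≠ q)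
    (hf : ∀ x, x ≠ p → x ≠ q → f x = c) :
    ∑ x, f x = f p + f q + (Fintype.card α - 2) * c := by
  have hcard : 2 ≤ Fintype.card α := by simpa [card_pair hpq] using card_le_univ {p, q}
  rw [sum_eq_sum_add_card_compl_nsmul {p, q} fun x hx => by simp at hx; exact hf x hx.1 hx.2,
    sum_pair hpq, card_compl, card_pair hpq, nsmul_eq_mul, Nat.cast_sub hcard, Nat.cast_two]

end FintypeSums

theorem Fin.sum_ite_val_eq {M : Type*} [AddCommMonoid M] {k : ℕ} (m : ℕ) (f : Fin k → M) :
    ∑ x : Fin k, (if (x : ℕ) = m then f x else 0) = if h : m < k then f ⟨m, h⟩ else 0 := by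
  split_ifs with h
  · have hx (x : Fin k) : (x : ℕ) = m ↔ x = ⟨m, h⟩ := (Fin.ext_iff (b := ⟨m, h⟩)).symm
    simp only [hx, sum_ite_eq', mem_univ, if_true]
  · exact sum_eq_zero fun x _ => if_neg (by omega)

section

variable {n : ℕ}

theorem Vmat_inl_inl (i k : Fin n) :
    Vmat n (.inl i) (.inl k) = if i = k then (n : ℝ) - 1 else 0 := by
  simp +contextual only [Vmat, Umat, mul_apply, transpose_apply, Fintype.sum_prod_type, mul_ite,
    mul_one, mul_zero, if_false]
  rw [sum_eq_single k (fun x _ hx => by simp [hx.symm]) (by simp), Fintype.sum_ite_eq_zero_sub]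
  by_cases h : i = k <;> simp [h]

theorem Vmat_inl_inr (i : Fin n) (l : Fin (n - 1)) :
    Vmat n (.inl i) (.inr l) = if (i : ℕ) = l then 0 else 1 := by
  simp +contextual only [Vmat, Umat, mul_apply, transpose_apply, Fintype.sum_prod_type, mul_ite,
    mul_one, mul_zero, if_false]
  rw [sum_eq_single i (fun x _ hx => by simp [hx.symm]) (by simp)]
  rw [sum_eq_single ⟨l, by omega⟩ (fun x _ hx => by simp [Fin.ext_iff] at hx; simp [hx]) (by simp)]
  simp [Fin.ext_iff]

theorem Vmat_inr_inl (l : Fin (n - 1)) (i : Fin n) :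
    Vmat n (.inr l) (.inl i) = if (i : ℕ) = l then 0 else 1 := by
  rw [← Vmat_inl_inr, ← transpose_apply (Vmat n), Vmat, transpose_mul, transpose_transpose]

theorem Vmat_inr_inr (l k : Fin (n - 1)) :
    Vmat n (.inr l) (.inr k) = if l = k then (n : ℝ) - 1 else 0 := by
  simp +contextual only [Vmat, Umat, mul_apply, transpose_apply, Fintype.sum_prod_type, mul_ite,
    mul_one, mul_zero, if_false]
  simp only [Fintype.sum_ite_eq_zero_sub, sum_sub_distrib, sum_const, Fin.sum_ite_val_eq]
  simp [show (k : ℕ) < n by omega, Fin.ext_iff, eq_comm]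
  split_ifs <;> simp

theorem Vmat_mul_apply_inl {α : Type*} (M : Matrix (Fin n ⊕ Fin (n - 1)) α ℝ) (i : Fin n) (c : α) :
    (Vmat n * M) (.inl i) c = ((n : ℝ) - 1) * M (.inl i) c + ∑ l, M (.inr l) c
      - if h : (i : ℕ) < n - 1 then M (.inr ⟨i, h⟩) c else 0 := by
  rw [mul_apply, Fintype.sum_sum_type, ← Fin.sum_ite_val_eq (i : ℕ) fun l => M (.inr l) c,
    add_sub_assoc, ← sum_sub_distrib]
  simp only [Vmat_inl_inl, Vmat_inl_inr, ite_mul, zero_mul, one_mul, sum_ite_eq, mem_univ, if_true]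
  congr 1
  refine sum_congr rfl fun l _ => ?_
  split_ifs <;> simp_all

theorem Vmat_mul_apply_inr {α : Type*} (M : Matrix (Fin n ⊕ Fin (n - 1)) α ℝ) (m : Fin (n - 1))
    (c : α) :
    (Vmat n * M) (.inr m) c = ∑ k, M (.inl k) c - M (.inl ⟨m, by omega⟩) c
      + ((n : ℝ) - 1) * M (.inr m) c := by
  have hm := Fin.sum_ite_val_eq (m : ℕ) fun k => M (.inl k) c
  rw [dif_pos (by omega)] at hm
  rw [mul_apply, Fintype.sum_sum_type, ← hm, ← sum_sub_distrib]
  simp only [Vmat_inr_inl, Vmat_inr_inr, ite_mul, zero_mul, one_mul, sum_ite_eq, mem_univ, if_true]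
  congr 1
  refine sum_congr rfl fun k _ => ?_
  split_ifs <;> simp_all

theorem natCast_sub_ne_zero_of_three_le (hn : 3 ≤ n) :
    (n : ℝ) ≠ 0 ∧ (n : ℝ) - 1 ≠ 0 ∧ (n : ℝ) - 2 ≠ 0 := by
  have : (3 : ℝ) ≤ n := by exact_mod_cast hn
  refine ⟨?_, ?_, ?_⟩ <;> linarith

theorem sum_Winv_inl_inl (hn : 3 ≤ n) (j : Fin n) :
    ∑ k, Winv n (.inl k) (.inl j) =
      if (j : ℕ) = n - 1 then ((n : ℝ) ^ 2 - n - 1) / (((n : ℝ) - 1) * ((n : ℝ) - 2))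
      else (n : ℝ) / ((n : ℝ) - 1) := by
  obtain ⟨h0, h1, h2⟩ := natCast_sub_ne_zero_of_three_le hn
  split_ifs with hj
  · rw [Fintype.sum_eq_add_card_sub_one_mul j (c := 1 / ((n : ℝ) - 1))
      fun k hk => by simp [Winv, hj, show (k : ℕ) ≠ n - 1 by omega]]
    simp [Winv, hj]
    field_simp
    ring
  · rw [Fintype.sum_eq_add_add_card_sub_two_mul (p := ⟨n - 1, by omega⟩) (q := j)
      (by simp [Fin.ext_iff]; omega) (c := ((n : ℝ) ^ 2 - 3 * n + 1) / (n * (n - 1) * (n - 2)))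
      fun k hk hk' => by simp [Fin.ext_iff] at hk; simp [Winv, hj, hk, hk']]
    simp [Winv, hj]
    field_simp
    ring

theorem sum_Winv_inr_inl (hn : 3 ≤ n) (j : Fin n) :
    ∑ l, Winv n (.inr l) (.inl j) =
      if (j : ℕ) = n - 1 then -((n : ℝ) - 1) / ((n : ℝ) - 2) else -1 := by
  obtain ⟨h0, h1, h2⟩ := natCast_sub_ne_zero_of_three_le hn
  split_ifs with hj
  · simp [Winv, hj, Nat.cast_pred (by omega : 0 < n)]
    field_simp
    ring
  · rw [Fintype.sum_eq_add_card_sub_one_mul ⟨j, by omega⟩ (c := -((n : ℝ) - 1) / (n * (n - 2)))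
      fun l hl => by simp [Fin.ext_iff] at hl; simp [Winv, hj, Ne.symm hl]]
    simp [Winv, hj, Nat.cast_pred (by omega : 0 < n)]
    field_simp
    ring

theorem sum_Winv_inl_inr (hn : 3 ≤ n) (m : Fin (n - 1)) :
    ∑ k, Winv n (.inl k) (.inr m) = -((n : ℝ) - 1) / ((n : ℝ) - 2) := by
  obtain ⟨h0, h1, h2⟩ := natCast_sub_ne_zero_of_three_le hn
  rw [Fintype.sum_eq_add_add_card_sub_two_mul (p := ⟨n - 1, by omega⟩) (q := ⟨m, by omega⟩)
      (by simp [Fin.ext_iff]; omega) (c := -((n : ℝ) - 1) / (n * (n - 2)))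
      fun k hk hk' => by simp [Fin.ext_iff] at hk hk'; simp [Winv, hk, hk']]
  simp [Winv, show (m : ℕ) ≠ n - 1 by omega]
  field_simp
  ring

theorem sum_Winv_inr_inr (hn : 3 ≤ n) (m : Fin (n - 1)) :
    ∑ l, Winv n (.inr l) (.inr m) = ((n : ℝ) - 1) / ((n : ℝ) - 2) := by
  obtain ⟨h0, h1, h2⟩ := natCast_sub_ne_zero_of_three_le hn
  rw [Fintype.sum_eq_add_card_sub_one_mul m (c := ((n : ℝ) - 1) / (n * (n - 2)))
      fun l hl => by simp [Winv, hl]]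
  simp [Winv, Nat.cast_pred (by omega : 0 < n)]
  field_simp
  ring

theorem Vmat_mul_Winv (hn : 3 ≤ n) : Vmat n * Winv n = 1 := by
  obtain ⟨h0, h1, h2⟩ := natCast_sub_ne_zero_of_three_le hn
  ext (i | m) (j | m')
  · rw [Vmat_mul_apply_inl, sum_Winv_inr_inl hn]
    simp only [Winv, one_apply, Sum.inl.injEq, Fin.ext_iff]
    split_ifs <;> first | omega | (field_simp; ring)
  · rw [Vmat_mul_apply_inl, sum_Winv_inr_inr hn]
    simp only [Winv, one_apply, reduceCtorEq, if_false, Fin.ext_iff]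
    split_ifs <;> first | omega | (field_simp; ring)
  · rw [Vmat_mul_apply_inr, sum_Winv_inl_inl hn]
    simp only [Winv, one_apply, reduceCtorEq, if_false, Fin.ext_iff]
    split_ifs <;> first | omega | (field_simp; ring)
  · rw [Vmat_mul_apply_inr, sum_Winv_inl_inr hn]
    simp only [Winv, one_apply, Sum.inr.injEq, Fin.ext_iff]
    split_ifs <;> first | omega | (field_simp; ring)

end

theorem stmt5 (n : ℕ) (hn : 3 ≤ n) :
    IsUnit (Vmat n) ∧ Vmat n * Winv n = 1 ∧ Winv n * Vmat n = 1 ∧ (Vmat n)⁻¹ = Winv n := by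
  have h := Vmat_mul_Winv hn
  exact ⟨IsUnit.of_mul_eq_one _ h, h, mul_eq_one_comm.mp h, inv_eq_right_inv h⟩
end

section
/- Let V = U^⊤U be as above and let S̆ ∈ ℝ^{(2n−1)×(2n−1)} be the matrix with entries s̆_{ij} = (δ_{ij}+1)/(n−1) when i, j ∈ [n] or when i, j ∈ {n+1,…,2n−1}, and s̆_{ij} = −1/(n−1) otherwise (where δ_{ij} is the Kronecker delta). Then there is an absolute constant C₀ > 0 such that max_{i,j} |(V^{-1})_{ij} − s̆_{ij}| ≤ C₀/(n−1)² for all n ≥ 3. -/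
open Matrix

/-- The block approximation `S̆` of `V⁻¹`: entries `(δ_{ab} + 1)/(n-1)` on the two diagonal
blocks and `-1/(n-1)` on the off-diagonal blocks. -/
noncomputable def breveS (n : ℕ) : Matrix (Fin n ⊕ Fin (n - 1)) (Fin n ⊕ Fin (n - 1)) ℝ :=
  fun a b =>
    match a, b with
    | Sum.inl i, Sum.inl j => ((if i = j then (1:ℝ) else 0) + 1) / ((n : ℝ) - 1)
    | Sum.inr l, Sum.inr l' => ((if l = l' then (1:ℝ) else 0) + 1) / ((n : ℝ) - 1)
    | Sum.inl _, Sum.inr _ => -1 / ((n : ℝ) - 1)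
    | Sum.inr _, Sum.inl _ => -1 / ((n : ℝ) - 1)

/-!
Write `n = m + 1` and split off the vertex `Fin.last m` of the first block, which has no partner
in the second block. Then `V` is the block matrix `[[m • 1, B], [Bᵀ, m • 1]]` with
`B k l = [k ≠ l.castSucc]`, so each entry of a product `V * W` is `m` times the matching entry of
`W` plus a column sum of `W` over the other block with at most one term removed. This makes it
possible to write down `V⁻¹` exactly: it is `S̆ + ((m - 1) m (m + 1))⁻¹ • D` for an explicit `D`
with entries of size at most `m + 1`, so every entry of `V⁻¹ - S̆` is at most
`1 / ((m - 1) m) ≤ 2 / m²`.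
-/

theorem Finset.sum_ite_eq_zero_else {ι M : Type*} [DecidableEq ι] [AddCommGroup M]
    {s : Finset ι} {a : ι} (h : a ∈ s) (f : ι → M) :
    ∑ x ∈ s, (if a = x then 0 else f x) = ∑ x ∈ s, f x - f a := by
  rw [Finset.sum_ite, Finset.sum_const_zero, zero_add, Finset.filter_ne, Finset.sum_erase_eq_sub h]

theorem Finset.sum_ite_eq_zero_else' {ι M : Type*} [DecidableEq ι] [AddCommGroup M]
    {s : Finset ι} {a : ι} (h : a ∈ s) (f : ι → M) :
    ∑ x ∈ s, (if x = a then 0 else f x) = ∑ x ∈ s, f x - f a := by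
  rw [Finset.sum_ite, Finset.sum_const_zero, zero_add, Finset.filter_ne', Finset.sum_erase_eq_sub h]

variable {m : ℕ}

def offDiagonalBlock (m : ℕ) : Matrix (Fin (m + 1)) (Fin m) ℝ :=
  of fun k l => if k = l.castSucc then 0 else 1

def succGram (m : ℕ) : Matrix (Fin (m + 1) ⊕ Fin m) (Fin (m + 1) ⊕ Fin m) ℝ :=
  fromBlocks ((m : ℝ) • 1) (offDiagonalBlock m) (offDiagonalBlock m)ᵀ ((m : ℝ) • 1)

theorem Vmat_succ : Vmat (m + 1) = succGram m := by
  ext (k | l) (k' | l')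
  · have h : ∀ x y : Fin (m + 1), Umat (m + 1) (x, y) (.inl k) * Umat (m + 1) (x, y) (.inl k')
        = if k = x then if k' = x then if x = y then 0 else 1 else 0 else 0 := by
      intro x y; simp only [Umat]; split_ifs <;> simp_all
    simp only [Vmat, mul_apply, transpose_apply, Fintype.sum_prod_type, h]
    simp [succGram, Finset.sum_ite_eq, eq_comm, Finset.sum_ite_eq_zero_else, one_apply]
  · have h : ∀ x y : Fin (m + 1), Umat (m + 1) (x, y) (.inl k) * Umat (m + 1) (x, y) (.inr l')
        = if k = x then if y = l'.castSucc then if x = y then 0 else 1 else 0 else 0 := by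
      intro x y; simp only [Umat, Fin.ext_iff, Fin.val_castSucc]; split_ifs <;> simp_all
    simp only [Vmat, mul_apply, transpose_apply, Fintype.sum_prod_type, h]
    simp [succGram, offDiagonalBlock]
  · have h : ∀ x y : Fin (m + 1), Umat (m + 1) (x, y) (.inr l) * Umat (m + 1) (x, y) (.inl k')
        = if k' = x then if y = l.castSucc then if x = y then 0 else 1 else 0 else 0 := by
      intro x y; simp only [Umat, Fin.ext_iff, Fin.val_castSucc]; split_ifs <;> simp_all
    simp only [Vmat, mul_apply, transpose_apply, Fintype.sum_prod_type, h]
    simp [succGram, offDiagonalBlock]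
  · have h : ∀ x y : Fin (m + 1), Umat (m + 1) (x, y) (.inr l) * Umat (m + 1) (x, y) (.inr l')
        = if y = l.castSucc then if l = l' then if x = y then 0 else 1 else 0 else 0 := by
      intro x y; simp only [Umat, Fin.ext_iff, Fin.val_castSucc]; split_ifs <;> simp_all
    simp only [Vmat, mul_apply, transpose_apply, Fintype.sum_prod_type, h]
    rw [Finset.sum_comm]
    simp [succGram, Finset.sum_ite_eq_zero_else', one_apply]

section succGram_mul

variable (W : Matrix (Fin (m + 1) ⊕ Fin m) (Fin (m + 1) ⊕ Fin m) ℝ) (b : Fin (m + 1) ⊕ Fin m)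

theorem succGram_mul_apply_inl_castSucc (i : Fin m) :
    (succGram m * W) (.inl i.castSucc) b =
      m * W (.inl i.castSucc) b + ∑ l, W (.inr l) b - W (.inr i) b := by
  simp [succGram, mul_apply, Fintype.sum_sum_type, offDiagonalBlock, one_apply, ite_mul,
    Finset.sum_ite_eq_zero_else]
  ring

theorem succGram_mul_apply_inl_last :
    (succGram m * W) (.inl (Fin.last m)) b = m * W (.inl (Fin.last m)) b + ∑ l, W (.inr l) b := by
  simp [succGram, mul_apply, Fintype.sum_sum_type, offDiagonalBlock, one_apply, ite_mul,
    (Fin.castSucc_ne_last _).symm]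

theorem succGram_mul_apply_inr (l : Fin m) :
    (succGram m * W) (.inr l) b =
      m * W (.inr l) b + ∑ k, W (.inl k) b - W (.inl l.castSucc) b := by
  simp [succGram, mul_apply, Fintype.sum_sum_type, offDiagonalBlock, one_apply, ite_mul,
    Finset.sum_ite_eq_zero_else']
  ring

end succGram_mul

/- `V⁻¹` commutes with the permutations of `Fin m` acting on both blocks at once, so its entries
depend only on whether the indices are equal or `Fin.last m`; solving `V W = 1` for these few
values gives the entries below. -/
def inverseCorrection (m : ℕ) : Matrix (Fin (m + 1) ⊕ Fin m) (Fin (m + 1) ⊕ Fin m) ℝ :=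
  of fun a b =>
    match a, b with
    | .inl i, .inl j =>
      if i = Fin.last m ∧ j = Fin.last m then m + 1
      else if i = Fin.last m ∨ j = Fin.last m then 0
      else (if i = j then 1 else 0) - m
    | .inl i, .inr l | .inr l, .inl i =>
      if i = Fin.last m then -(m + 1) else (if i = l.castSucc then (m : ℝ) else 0) - 1
    | .inr l, .inr l' => (if l = l' then 1 else 0) + 1

noncomputable def succGramInv (m : ℕ) : Matrix (Fin (m + 1) ⊕ Fin m) (Fin (m + 1) ⊕ Fin m) ℝ :=
  of fun a b => breveS (m + 1) a b + (((m : ℝ) - 1) * m * (m + 1))⁻¹ * inverseCorrection m a b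

theorem succGram_mul_succGramInv (hm : 2 ≤ m) : succGram m * succGramInv m = 1 := by
  have h₀ : (m : ℝ) ≠ 0 := by positivity
  have h₁ : (m : ℝ) - 1 ≠ 0 := by
    have : (2 : ℝ) ≤ m := by exact_mod_cast hm
    linarith
  ext (i | i) (j | j) <;> (try induction i using Fin.lastCases) <;>
    (try induction j using Fin.lastCases)
  all_goals
    simp only [succGram_mul_apply_inl_castSucc, succGram_mul_apply_inl_last, succGram_mul_apply_inr]
    simp only [succGramInv, breveS, inverseCorrection, of_apply, one_apply, Sum.inl.injEq,
      Sum.inr.injEq, reduceCtorEq, Nat.add_one_sub_one, Nat.cast_add, Nat.cast_one,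
      add_sub_cancel_right, Fin.castSucc_inj, Fin.castSucc_ne_last, (Fin.castSucc_ne_last _).symm,
      ↓reduceIte, and_self, and_true, and_false, or_self, or_true, or_false, Fin.sum_univ_castSucc,
      Finset.sum_add_distrib, Finset.sum_sub_distrib, Finset.sum_const, Finset.card_univ,
      Fintype.card_fin, Finset.sum_ite_eq, Finset.sum_ite_eq', Finset.mem_univ, nsmul_eq_mul,
      smul_neg, add_div, ite_div, one_div, zero_div, mul_add, mul_sub, mul_ite, mul_neg,
      mul_one, mul_zero, neg_add_rev, zero_add, add_zero]
    try split_ifs <;> subst_vars <;> try contradiction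
  all_goals field_simp
  all_goals ring

theorem inv_Vmat_succ (hm : 2 ≤ m) : (Vmat (m + 1))⁻¹ = succGramInv m :=
  inv_eq_right_inv (by rw [Vmat_succ]; exact succGram_mul_succGramInv hm)

theorem abs_inverseCorrection_le (hm : 1 ≤ m) (a b : Fin (m + 1) ⊕ Fin m) :
    |inverseCorrection m a b| ≤ m + 1 := by
  have h₁ : (1 : ℝ) ≤ m := by exact_mod_cast hm
  rcases a with i | l <;> rcases b with j | l' <;> simp only [inverseCorrection, of_apply] <;>
    split_ifs <;> rw [abs_le] <;> constructor <;> linarith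

theorem stmt6 :
    ∃ C₀ : ℝ, 0 < C₀ ∧ ∀ n : ℕ, 3 ≤ n →
      ∀ a b : Fin n ⊕ Fin (n - 1),
        |(Vmat n)⁻¹ a b - breveS n a b| ≤ C₀ / ((n : ℝ) - 1) ^ 2 := by
  refine ⟨2, two_pos, fun n hn a b => ?_⟩
  obtain ⟨m, rfl⟩ : ∃ m, n = m + 1 := ⟨n - 1, by omega⟩
  have hm : (2 : ℝ) ≤ m := by exact_mod_cast (by omega : 2 ≤ m)
  have hc : (0 : ℝ) < ((m : ℝ) - 1) * m * (m + 1) := by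
    apply mul_pos (mul_pos _ _) _ <;> linarith
  rw [inv_Vmat_succ (by omega)]
  simp only [succGramInv, of_apply, add_sub_cancel_left, abs_mul, abs_inv, abs_of_pos hc,
    Nat.cast_add, Nat.cast_one, add_sub_cancel_right]
  calc (((m : ℝ) - 1) * m * (m + 1))⁻¹ * |inverseCorrection m a b|
      ≤ (((m : ℝ) - 1) * m * (m + 1))⁻¹ * (m + 1) := by
        gcongr; exact abs_inverseCorrection_le (by omega) a b
    _ ≤ 2 / (m : ℝ) ^ 2 := by
        rw [inv_mul_le_iff₀ hc]; field_simp; nlinarith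
end

section
/- Let V = U^⊤U for the network design matrix U (n ≥ 3) and S̆ its block approximation with entries s̆_{ij} = (δ_{ij}+1)/(n−1) on diagonal blocks and −1/(n−1) off. Then max_{i,j} |(V^{-1} − S̆)(I − V S̆)|_{ij} ≤ C/(n−1)² for some absolute constant C, using ‖V^{-1} − S̆‖_max ≤ C₀/(n−1)² and ‖S̆(I − V S̆)‖_max ≤ 2/(n−1)². -/
open Matrix

/-!
Write `m = n - 1` and index the second block by `Fin m`, its coordinate `l` belonging to team
`l.castSucc`; team `Fin.last m` is the one without a second-block coordinate. With the sign vector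
`σ = (1, …, 1, -1, …, -1)` one has `S̆ = (1 + σσᵀ) / m`, and everything becomes explicit:
`Δ := m (1 - V S̆)` has entries in `{0, ±1}`, and `K := m (m² - 1) (V⁻¹ - S̆)` has integer entries
of size at most `m + 1`, the inverse being certified by `V K = (m² - 1) Δ`. Hence
`|V⁻¹ - S̆| ≤ (m + 1) / (m (m² - 1)) ≤ 2 / m²`. Next, `S̆ Δ = (Δ + σ (σᵀ Δ)) / m` and the signed
column sums `σᵀ Δ` lie in `{0, -1}`, so `|S̆ (1 - V S̆)| ≤ 2 / m²`. The last bound is the crude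
`(2m + 1) · (2 / m²) · (1 / m) ≤ 6 / m²`.
-/

lemma Fintype.sum_ite_eq_zero_left {α R : Type*} [Fintype α] [DecidableEq α] [AddCommGroup R]
    (c : α) (f : α → R) : ∑ x, (if x = c then 0 else f x) = ∑ x, f x - f c := by
  rw [eq_sub_iff_add_eq, ← Fintype.sum_ite_eq' c f, ← Finset.sum_add_distrib]
  exact Finset.sum_congr rfl fun x _ => by split <;> simp

lemma Matrix.abs_mul_apply_le {R l ι n : Type*} [CommRing R] [LinearOrder R] [IsStrictOrderedRing R]
    [Fintype ι] {A : Matrix l ι R} {B : Matrix ι n R} {α β : R}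
    (hA : ∀ i k, |A i k| ≤ α) (hB : ∀ k j, |B k j| ≤ β) (i : l) (j : n) :
    |(A * B) i j| ≤ Fintype.card ι * (α * β) := by
  calc |(A * B) i j| ≤ ∑ k, |A i k * B k j| := Finset.abs_sum_le_sum_abs _ _
    _ ≤ ∑ _k : ι, α * β := Finset.sum_le_sum fun k _ => by
        rw [abs_mul]
        exact mul_le_mul (hA i k) (hB k j) (abs_nonneg _) ((abs_nonneg _).trans (hA i k))
    _ = Fintype.card ι * (α * β) := by simp

namespace NetworkDesign

variable {m : ℕ}

-- `Vmat (m + 1)` and `breveS (m + 1)` with `Fin m` in place of `Fin (m + 1 - 1)`: the two index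
-- types are defeq but not reducibly so, which would block the products with the matrices below.
noncomputable def gram (m : ℕ) : Matrix (Fin (m + 1) ⊕ Fin m) (Fin (m + 1) ⊕ Fin m) ℝ :=
  Vmat (m + 1)

noncomputable def approxInv (m : ℕ) : Matrix (Fin (m + 1) ⊕ Fin m) (Fin (m + 1) ⊕ Fin m) ℝ :=
  breveS (m + 1)

lemma Umat_succ_apply_inl (a b k : Fin (m + 1)) :
    Umat (m + 1) (a, b) (.inl k) = if a = k then (if b = k then 0 else 1) else 0 := by
  by_cases a = b <;> by_cases a = k <;> simp_all [Umat, eq_comm]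

lemma Umat_succ_apply_inr (a b : Fin (m + 1)) (l : Fin m) :
    Umat (m + 1) (a, b) (.inr l) =
      if b = l.castSucc then (if a = l.castSucc then 0 else 1) else 0 := by
  by_cases a = b <;> by_cases b = l.castSucc <;> simp_all [Umat, Fin.ext_iff]

lemma gram_inl_inl (i j : Fin (m + 1)) :
    gram m (.inl i) (.inl j) = if i = j then (m : ℝ) else 0 := by
  show Vmat (m + 1) (.inl i) (.inl j) = _
  simp only [Vmat, mul_apply, Fintype.sum_prod_type, transpose_apply, Umat_succ_apply_inl]
  rw [Finset.sum_comm]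
  simp [mul_ite, Fintype.sum_ite_eq_zero_left]
  grind

lemma gram_inl_inr (i : Fin (m + 1)) (l : Fin m) :
    gram m (.inl i) (.inr l) = if l.castSucc = i then 0 else 1 := by
  show Vmat (m + 1) (.inl i) (.inr l) = _
  simp only [Vmat, mul_apply, Fintype.sum_prod_type, transpose_apply, Umat_succ_apply_inl,
    Umat_succ_apply_inr]
  simp [mul_ite, Fintype.sum_ite_eq_zero_left]

lemma gram_inr_inr (l l' : Fin m) :
    gram m (.inr l) (.inr l') = if l = l' then (m : ℝ) else 0 := by
  show Vmat (m + 1) (.inr l) (.inr l') = _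
  simp only [Vmat, mul_apply, Fintype.sum_prod_type, transpose_apply, Umat_succ_apply_inr]
  simp [mul_ite, Fintype.sum_ite_eq_zero_left]
  grind

lemma gram_isSymm (m : ℕ) : (gram m).IsSymm := by
  rw [IsSymm, gram, Vmat, transpose_mul, transpose_transpose]

lemma gram_inr_inl (l : Fin m) (j : Fin (m + 1)) :
    gram m (.inr l) (.inl j) = if j = l.castSucc then 0 else 1 := by
  rw [← (gram_isSymm m).apply, gram_inl_inr]
  exact if_congr eq_comm rfl rfl

variable {n : Type*}

lemma gram_mul_apply_inl_castSucc (X : Matrix (Fin (m + 1) ⊕ Fin m) n ℝ) (i : Fin m) (b : n) :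
    (gram m * X) (.inl i.castSucc) b =
      m * X (.inl i.castSucc) b + (∑ l, X (.inr l) b - X (.inr i) b) := by
  simp [mul_apply, Fintype.sum_sum_type, gram_inl_inl, gram_inl_inr, ite_mul,
    Fintype.sum_ite_eq_zero_left]

lemma gram_mul_apply_inl_last (X : Matrix (Fin (m + 1) ⊕ Fin m) n ℝ) (b : n) :
    (gram m * X) (.inl (Fin.last m)) b = m * X (.inl (Fin.last m)) b + ∑ l, X (.inr l) b := by
  simp [mul_apply, Fintype.sum_sum_type, gram_inl_inl, gram_inl_inr, ite_mul]

lemma gram_mul_apply_inr (X : Matrix (Fin (m + 1) ⊕ Fin m) n ℝ) (l : Fin m) (b : n) :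
    (gram m * X) (.inr l) b =
      (∑ k, X (.inl k) b - X (.inl l.castSucc) b) + m * X (.inr l) b := by
  simp [mul_apply, Fintype.sum_sum_type, gram_inr_inl, gram_inr_inr, ite_mul,
    Fintype.sum_ite_eq_zero_left]

def defect (m : ℕ) : Matrix (Fin (m + 1) ⊕ Fin m) (Fin (m + 1) ⊕ Fin m) ℝ
  | .inl i, .inl _ => if i = Fin.last m then 0 else -1
  | .inl i, .inr l => if i = Fin.last m then -1 else if i = l.castSucc then 1 else 0
  | .inr l, .inl j => if l.castSucc = j then 0 else -1
  | .inr _, .inr _ => 0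

def invCorrection (m : ℕ) : Matrix (Fin (m + 1) ⊕ Fin m) (Fin (m + 1) ⊕ Fin m) ℝ
  | .inl i, .inl j =>
      if i = Fin.last m then (if j = Fin.last m then (m : ℝ) + 1 else 0)
      else if j = Fin.last m then 0 else (if i = j then 1 else 0) - (m : ℝ)
  | .inl i, .inr l =>
      if i = Fin.last m then -((m : ℝ) + 1) else (if i = l.castSucc then (m : ℝ) else 0) - 1
  | .inr l, .inl j =>
      if j = Fin.last m then -((m : ℝ) + 1) else (if j = l.castSucc then (m : ℝ) else 0) - 1
  | .inr l, .inr l' => (if l = l' then 1 else 0) + 1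

lemma approxInv_eq (m : ℕ) :
    approxInv m = (m : ℝ)⁻¹ • (1 + vecMulVec (Sum.elim 1 (-1)) (Sum.elim 1 (-1))) := by
  ext (i | l) (j | l') <;> simp [approxInv, breveS, one_apply, vecMulVec_apply, div_eq_inv_mul]

lemma gram_mul_approxInv (hm : m ≠ 0) : gram m * approxInv m = 1 - (m : ℝ)⁻¹ • defect m := by
  have hm' : (m : ℝ) ≠ 0 := Nat.cast_ne_zero.2 hm
  ext (i | l) (j | l') <;> (try induction i using Fin.lastCases) <;>
    (try induction j using Fin.lastCases) <;>
    simp [gram_mul_apply_inl_castSucc, gram_mul_apply_inl_last, gram_mul_apply_inr, approxInv_eq,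
      defect, one_apply, vecMulVec_apply, Finset.sum_add_distrib, mul_ite,
      fun i : Fin m => (Fin.castSucc_ne_last i).symm] <;> grind

lemma gram_mul_invCorrection : gram m * invCorrection m = ((m : ℝ) ^ 2 - 1) • defect m := by
  ext (i | l) (j | l') <;> (try induction i using Fin.lastCases) <;>
    (try induction j using Fin.lastCases) <;>
    simp [gram_mul_apply_inl_castSucc, gram_mul_apply_inl_last, gram_mul_apply_inr,
      invCorrection, defect, Fin.sum_univ_castSucc, Finset.sum_add_distrib,
      Finset.sum_sub_distrib] <;> grind

lemma inv_gram (hm : 2 ≤ m) :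
    (gram m)⁻¹ = approxInv m + ((m : ℝ) * ((m : ℝ) ^ 2 - 1))⁻¹ • invCorrection m := by
  have hm' : (2 : ℝ) ≤ m := by exact_mod_cast hm
  have hcoeff : ((m : ℝ) * ((m : ℝ) ^ 2 - 1))⁻¹ * ((m : ℝ) ^ 2 - 1) = (m : ℝ)⁻¹ := by
    have : (m : ℝ) ^ 2 - 1 ≠ 0 := by nlinarith
    field_simp
  apply inv_eq_right_inv
  rw [mul_add, Matrix.mul_smul, gram_mul_approxInv (by omega), gram_mul_invCorrection,
    smul_smul, hcoeff, sub_add_cancel]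

lemma abs_defect_le (a b : Fin (m + 1) ⊕ Fin m) : |defect m a b| ≤ 1 := by
  rcases a with i | l <;> rcases b with j | l' <;> simp only [defect] <;> (try split_ifs) <;>
    norm_num

lemma abs_invCorrection_le (a b : Fin (m + 1) ⊕ Fin m) : |invCorrection m a b| ≤ m + 1 := by
  have hm : (0 : ℝ) ≤ m := m.cast_nonneg
  rcases a with i | l <;> rcases b with j | l' <;> simp only [invCorrection]
  on_goal 4 => have : (1 : ℝ) ≤ m := by exact_mod_cast l.pos
  all_goals split_ifs <;> rw [abs_le] <;> constructor <;> linarith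

lemma sign_vecMul_defect :
    Sum.elim 1 (-1) ᵥ* defect m = Sum.elim (fun j => if j = Fin.last m then 0 else -1) 0 := by
  ext (j | l')
  · induction j using Fin.lastCases
    · simp [vecMul, dotProduct, Fintype.sum_sum_type, defect, Fintype.sum_ite_eq_zero_left]
    · simp [vecMul, dotProduct, Fintype.sum_sum_type, defect, Fintype.sum_ite_eq_zero_left]
      ring
  · simp [vecMul, dotProduct, Fintype.sum_sum_type, defect, Fin.sum_univ_castSucc]

lemma approxInv_mul (X : Matrix (Fin (m + 1) ⊕ Fin m) n ℝ) :
    approxInv m * X =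
      (m : ℝ)⁻¹ • (X + vecMulVec (Sum.elim 1 (-1)) (Sum.elim 1 (-1) ᵥ* X)) := by
  rw [approxInv_eq, Matrix.smul_mul, Matrix.add_mul, Matrix.one_mul, vecMulVec_mul]

lemma abs_approxInv_mul_defect_le (a b : Fin (m + 1) ⊕ Fin m) :
    |(approxInv m * defect m) a b| ≤ 2 / m := by
  have hsign : |(Sum.elim 1 (-1) : _ → ℝ) a| = 1 := by rcases a <;> simp
  have hcol : |(Sum.elim 1 (-1) ᵥ* defect m) b| ≤ 1 := by
    rw [sign_vecMul_defect]
    rcases b with j | l <;> simp only [Sum.elim_inl, Sum.elim_inr] <;> (try split_ifs) <;> simp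
  rw [approxInv_mul, Matrix.smul_apply, smul_eq_mul, abs_mul, abs_inv, Nat.abs_cast,
    ← div_eq_inv_mul]
  gcongr
  calc _ ≤ |defect m a b| +
        |(Sum.elim 1 (-1) : _ → ℝ) a| * |(Sum.elim 1 (-1) ᵥ* defect m) b| := by
        rw [Matrix.add_apply, vecMulVec_apply, ← abs_mul]
        exact abs_add_le _ _
    _ ≤ 1 + 1 * 1 := by rw [hsign]; gcongr; exact abs_defect_le a b
    _ = 2 := by norm_num

lemma abs_inv_gram_sub_approxInv_le (hm : 2 ≤ m) (a b : Fin (m + 1) ⊕ Fin m) :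
    |((gram m)⁻¹ - approxInv m) a b| ≤ 2 / (m : ℝ) ^ 2 := by
  have hm' : (2 : ℝ) ≤ m := by exact_mod_cast hm
  have hden : 0 < (m : ℝ) * ((m : ℝ) ^ 2 - 1) := by nlinarith
  have hK := abs_invCorrection_le a b
  rw [inv_gram hm, add_sub_cancel_left, Matrix.smul_apply, smul_eq_mul,
    abs_mul, abs_inv, abs_of_pos hden, inv_mul_eq_div, div_le_div_iff₀ hden (by positivity)]
  nlinarith [mul_le_mul_of_nonneg_right hK (sq_nonneg (m : ℝ))]

lemma abs_approxInv_mul_one_sub_gram_mul_approxInv_le (hm : m ≠ 0) (a b : Fin (m + 1) ⊕ Fin m) :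
    |(approxInv m * (1 - gram m * approxInv m)) a b| ≤ 2 / (m : ℝ) ^ 2 := by
  rw [gram_mul_approxInv hm, sub_sub_cancel, Matrix.mul_smul, Matrix.smul_apply, smul_eq_mul,
    abs_mul, abs_inv, Nat.abs_cast]
  calc _ ≤ (m : ℝ)⁻¹ * (2 / m) := by gcongr; exact abs_approxInv_mul_defect_le a b
    _ = 2 / (m : ℝ) ^ 2 := by ring

lemma abs_one_sub_gram_mul_approxInv_le (hm : m ≠ 0) (a b : Fin (m + 1) ⊕ Fin m) :
    |(1 - gram m * approxInv m) a b| ≤ 1 / m := by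
  rw [gram_mul_approxInv hm, sub_sub_cancel, Matrix.smul_apply, smul_eq_mul, abs_mul, abs_inv,
    Nat.abs_cast, ← div_eq_inv_mul]
  gcongr
  exact abs_defect_le a b

lemma abs_inv_gram_sub_approxInv_mul_one_sub_gram_mul_approxInv_le (hm : 2 ≤ m)
    (a b : Fin (m + 1) ⊕ Fin m) :
    |(((gram m)⁻¹ - approxInv m) * (1 - gram m * approxInv m)) a b| ≤ 6 / (m : ℝ) ^ 2 := by
  have hm' : (2 : ℝ) ≤ m := by exact_mod_cast hm
  calc _ ≤ Fintype.card (Fin (m + 1) ⊕ Fin m) * (2 / (m : ℝ) ^ 2 * (1 / m)) :=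
        abs_mul_apply_le (abs_inv_gram_sub_approxInv_le hm)
          (abs_one_sub_gram_mul_approxInv_le (by omega)) a b
    _ = (2 + 1 / m) * (2 / (m : ℝ) ^ 2) := by
        simp only [Fintype.card_sum, Fintype.card_fin]
        push_cast
        field_simp
        ring
    _ ≤ 3 * (2 / (m : ℝ) ^ 2) := by
        gcongr
        linarith [(div_le_one (by positivity : (0 : ℝ) < m)).2 (by linarith : (1 : ℝ) ≤ m)]
    _ = 6 / (m : ℝ) ^ 2 := by ring

end NetworkDesign

theorem stmt18 :
    ∃ C₀ C : ℝ, 0 < C₀ ∧ 0 < C ∧ ∀ n : ℕ, 3 ≤ n →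
      (∀ a b : Fin n ⊕ Fin (n - 1),
        |((Vmat n)⁻¹ - breveS n) a b| ≤ C₀ / ((n : ℝ) - 1) ^ 2) ∧
      (∀ a b : Fin n ⊕ Fin (n - 1),
        |(breveS n * (1 - Vmat n * breveS n)) a b| ≤ 2 / ((n : ℝ) - 1) ^ 2) ∧
      (∀ a b : Fin n ⊕ Fin (n - 1),
        |(((Vmat n)⁻¹ - breveS n) * (1 - Vmat n * breveS n)) a b| ≤ C / ((n : ℝ) - 1) ^ 2) := by
  refine ⟨2, 6, by norm_num, by norm_num, fun n hn => ?_⟩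
  obtain ⟨m, rfl⟩ : ∃ m, n = m + 1 := ⟨n - 1, by omega⟩
  have hm : 2 ≤ m := by omega
  rw [Nat.cast_succ, add_sub_cancel_right]
  exact ⟨NetworkDesign.abs_inv_gram_sub_approxInv_le hm,
    NetworkDesign.abs_approxInv_mul_one_sub_gram_mul_approxInv_le (by omega),
    NetworkDesign.abs_inv_gram_sub_approxInv_mul_one_sub_gram_mul_approxInv_le hm⟩
end
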